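/- Let A be a finite left brace with Soc(A) = {0} and let X ⊆ A be a transitive cycle base of A, regarded as a cycle set with operation x·y := λ_x^{-1}(y). If ∼ is a congruence of the cycle set X, then the additive subgroup I' of (A,+) generated by {x − y : x,y ∈ X, x ∼ y} is an ideal of A, and the orbit relation of I' on X refines ∼, i.e. whenever there exists a ∈ I' with λ_a(x) = y for x,y ∈ X, then x ∼ y. -/

import Mathlib

/-- A left brace structure on an additive abelian group `A`: a group operation `mul`
(with identity `one` and inverses `inv`) satisfying `a ∘ (b + c) + a = a ∘ b + a ∘ c`. -/
structure LeftBrace (A : Type*) [AddCommGroup A] where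
  mul : A → A → A
  one : A
  inv : A → A
  mul_assoc' : ∀ a b c, mul (mul a b) c = mul a (mul b c)
  one_mul' : ∀ a, mul one a = a
  mul_one' : ∀ a, mul a one = a
  inv_mul' : ∀ a, mul (inv a) a = one
  mul_inv' : ∀ a, mul a (inv a) = one
  compat : ∀ a b c, mul a (b + c) + a = mul a b + mul a c

namespace LeftBrace

variable {A : Type*} [AddCommGroup A]

/-- The map `λ_a : b ↦ -a + a ∘ b`. -/
def lam (B : LeftBrace A) (a b : A) : A := -a + B.mul a b

/-- The cycle set operation `x · y := λ_x⁻¹ (y)` associated to a left brace. -/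
noncomputable def cop (B : LeftBrace A) (x y : A) : A :=
  @Function.invFun A A ⟨0⟩ (B.lam x) y

/-- An ideal of a left brace: a normal subgroup of `(A, ∘)` invariant under all `λ_a`. -/
def IsIdeal (B : LeftBrace A) (I : Set A) : Prop :=
  B.one ∈ I ∧ (∀ a ∈ I, ∀ b ∈ I, B.mul a b ∈ I) ∧ (∀ a ∈ I, B.inv a ∈ I) ∧
    (∀ g : A, ∀ a ∈ I, B.mul (B.mul g a) (B.inv g) ∈ I) ∧
    (∀ g : A, ∀ a ∈ I, B.lam g a ∈ I)

end LeftBrace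


/-!
Since `X` generates `(A, +)` and `a + b = a ∘ λ_a⁻¹(b)`, every element of `A` is a `∘`-product
of elements of `X`; as `λ_x⁻¹` is `y ↦ x · y`, each `λ_x` with `x ∈ X` preserves `∼` (an injective
self-map of a finite set that preserves a relation also reflects it), hence so does every `λ_a`.
For `u ∼ v` in `X` put `d = u - v` and `p = λ_d⁻¹(v)`, so that `d ∘ p = u`; then `p · p = u · v`,
which is `∼`-related to `u · u`, and injectivity of the diagonal map `x ↦ x · x` gives `u ∼ p`.
Thus `u · z ∼ p · z`, and applying `λ_u` yields `z ∼ λ_d(z)` for every `z ∈ X`. The elements `a`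
with `z ∼ λ_a(z)` on `X` are closed under `∘`, which gives the refinement statement, and then
`c - λ_a(c) ∈ I'` for all `a ∈ I'`, which is what normality of the `λ`-invariant subgroup `I'`
needs.
-/

open Function

theorem reflects_of_injective_of_finite {α : Type*} [Finite α] {X : Set α}
    {r : α → α → Prop} {f : α → α} (hf : Injective f) (hX : Set.MapsTo f X X)
    (hr : ∀ z ∈ X, ∀ w ∈ X, r z w → r (f z) (f w)) {z w : α} (hz : z ∈ X) (hw : w ∈ X)
    (h : r (f z) (f w)) : r z w := by
  have : Fintype α := Fintype.ofFinite α
  have hid : f^[(Fintype.card α).factorial] = id :=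
    injective_iff_iterate_factorial_card_eq_id.mp hf
  have hiter : ∀ k, ∀ z ∈ X, ∀ w ∈ X, r z w → r (f^[k] z) (f^[k] w) := by
    intro k
    induction k with
    | zero => exact fun z _ w _ h => h
    | succ k ih =>
      intro z hz w hw h
      rw [iterate_succ_apply, iterate_succ_apply]
      exact ih _ (hX hz) _ (hX hw) (hr z hz w hw h)
  obtain ⟨k, hk⟩ := Nat.exists_eq_succ_of_ne_zero ((Fintype.card α).factorial_ne_zero)
  have := hiter k (f z) (hX hz) (f w) (hX hw) h
  rwa [← iterate_succ_apply, ← iterate_succ_apply, ← hk, hid] at this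

namespace LeftBrace

variable {A : Type*} [AddCommGroup A] (B : LeftBrace A)

theorem mul_zero (a : A) : B.mul a 0 = a := by
  have h := B.compat a 0 0
  rw [add_zero] at h
  exact (add_left_cancel h).symm

theorem one_eq_zero : B.one = 0 :=
  (B.mul_zero B.one).symm.trans (B.one_mul' 0)

theorem zero_mul (b : A) : B.mul 0 b = b := by
  rw [← B.one_eq_zero]
  exact B.one_mul' b

theorem mul_eq_add_lam (a b : A) : B.mul a b = a + B.lam a b := by
  unfold lam
  abel

theorem lam_add (a b c : A) : B.lam a (b + c) = B.lam a b + B.lam a c := by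
  have h := B.compat a b c
  rw [B.mul_eq_add_lam, B.mul_eq_add_lam, B.mul_eq_add_lam] at h
  linear_combination (norm := abel) h

def lamHom (a : A) : A →+ A := AddMonoidHom.mk' (B.lam a) (B.lam_add a)

@[simp]
theorem lamHom_apply (a b : A) : B.lamHom a b = B.lam a b := rfl

theorem lam_zero (a : A) : B.lam a 0 = 0 := (B.lamHom a).map_zero

theorem lam_neg (a b : A) : B.lam a (-b) = -B.lam a b := (B.lamHom a).map_neg b

theorem lam_sub (a b c : A) : B.lam a (b - c) = B.lam a b - B.lam a c :=
  (B.lamHom a).map_sub b c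

theorem lam_mul (a b c : A) : B.lam (B.mul a b) c = B.lam a (B.lam b c) := by
  have h := B.mul_assoc' a b c
  rw [B.mul_eq_add_lam (B.mul a b) c, B.mul_eq_add_lam b c, B.mul_eq_add_lam a (b + _),
    B.lam_add, ← add_assoc, ← B.mul_eq_add_lam a b] at h
  exact add_left_cancel h

theorem lam_zero_left (b : A) : B.lam 0 b = b := by
  unfold lam
  rw [B.zero_mul, neg_zero, zero_add]

theorem lam_inv_lam (a b : A) : B.lam (B.inv a) (B.lam a b) = b := by
  rw [← B.lam_mul, B.inv_mul', B.one_eq_zero, B.lam_zero_left]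

theorem lam_lam_inv (a b : A) : B.lam a (B.lam (B.inv a) b) = b := by
  rw [← B.lam_mul, B.mul_inv', B.one_eq_zero, B.lam_zero_left]

theorem lam_injective (a : A) : Injective (B.lam a) :=
  LeftInverse.injective (B.lam_inv_lam a)

theorem add_eq_mul_lam_inv (a b : A) : a + b = B.mul a (B.lam (B.inv a) b) := by
  rw [B.mul_eq_add_lam, B.lam_lam_inv]

theorem inv_eq_neg_lam (a : A) : B.inv a = -B.lam (B.inv a) a := by
  rw [eq_neg_iff_add_eq_zero, ← B.mul_eq_add_lam, B.inv_mul', B.one_eq_zero]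

theorem inv_inv (a : A) : B.inv (B.inv a) = a := by
  have h := B.mul_assoc' (B.inv (B.inv a)) (B.inv a) a
  rwa [B.inv_mul', B.one_mul', B.inv_mul', B.mul_one', eq_comm] at h

theorem cop_eq_lam_inv (x y : A) : B.cop x y = B.lam (B.inv x) y := by
  have : Nonempty A := ⟨0⟩
  apply B.lam_injective x
  rw [B.lam_lam_inv]
  exact invFun_eq ⟨B.lam (B.inv x) y, B.lam_lam_inv x y⟩

theorem cop_self (x : A) : B.cop x x = -B.inv x := by
  rw [B.cop_eq_lam_inv, B.inv_eq_neg_lam x, neg_neg, ← B.inv_eq_neg_lam]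

theorem lam_mem_closure {S : Set A} (hS : ∀ g, ∀ s ∈ S, B.lam g s ∈ S) (g : A) {a : A}
    (ha : a ∈ AddSubgroup.closure S) : B.lam g a ∈ AddSubgroup.closure S := by
  have : AddSubgroup.closure S ≤ (AddSubgroup.closure S).comap (B.lamHom g) :=
    AddSubgroup.closure_le _ |>.mpr fun s hs => AddSubgroup.subset_closure (hS g s hs)
  exact this ha

theorem closure_subset_of_lam_mem [Finite A] {S : Set A} (hS : ∀ g, ∀ s ∈ S, B.lam g s ∈ S)
    {P : Set A} (hP0 : 0 ∈ P) (hPmul : ∀ a ∈ P, ∀ b ∈ P, B.mul a b ∈ P) (hSP : S ⊆ P) :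
    (AddSubgroup.closure S : Set A) ⊆ P := by
  intro a ha
  rw [SetLike.mem_coe, ← AddSubgroup.mem_toAddSubmonoid,
    AddSubgroup.closure_toAddSubmonoid_of_finite] at ha
  suffices ∀ g, B.lam g a ∈ P by simpa only [B.lam_zero_left] using this 0
  induction ha using AddSubmonoid.closure_induction with
  | mem s hs => exact fun g => hSP (hS g s hs)
  | zero => exact fun g => (B.lam_zero g).symm ▸ hP0
  | add b c _ _ hb hc =>
    intro g
    rw [B.lam_add, B.add_eq_mul_lam_inv, ← B.lam_mul]
    exact hPmul _ (hb g) _ (hc _)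

theorem isIdeal_of_lam_mem (I : AddSubgroup A) (hlam : ∀ g, ∀ a ∈ I, B.lam g a ∈ I)
    (hsub : ∀ a ∈ I, ∀ c, c - B.lam a c ∈ I) : B.IsIdeal I := by
  refine ⟨?_, fun a ha b hb => ?_, fun a ha => ?_, fun g a ha => ?_, hlam⟩
  · rw [B.one_eq_zero]
    exact I.zero_mem
  · rw [B.mul_eq_add_lam]
    exact I.add_mem ha (hlam a b hb)
  · rw [B.inv_eq_neg_lam]
    exact I.neg_mem (hlam _ a ha)
  · -- `c = -g⁻¹` and `λ_g(c) = g`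
    set c := B.lam (B.inv g) g
    have hconj : B.mul (B.mul g a) (B.inv g) = B.lam g a + B.lam g (c - B.lam a c) := by
      rw [B.mul_eq_add_lam (B.mul g a), B.lam_mul, B.mul_eq_add_lam g a, B.inv_eq_neg_lam g,
        B.lam_neg, B.lam_neg, B.lam_sub, B.lam_lam_inv]
      abel
    rw [hconj]
    exact I.add_mem (hlam g a ha) (hlam g _ (hsub a ha c))

section CycleSet

variable {B} {X : Set A} {r : A → A → Prop}

def relDiffs (X : Set A) (r : A → A → Prop) : Set A :=
  {d | ∃ x ∈ X, ∃ y ∈ X, r x y ∧ d = x - y}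

theorem lam_preserves_of_mem [Finite A] (hX : ∀ a, ∀ x ∈ X, B.lam a x ∈ X)
    (hrefl : ∀ x ∈ X, r x x)
    (hcong : ∀ x ∈ X, ∀ y ∈ X, ∀ u ∈ X, ∀ v ∈ X, r x y → r u v → r (B.cop x u) (B.cop y v))
    {x : A} (hx : x ∈ X) {z w : A} (hz : z ∈ X) (hw : w ∈ X) (h : r z w) :
    r (B.lam x z) (B.lam x w) := by
  refine reflects_of_injective_of_finite (B.lam_injective (B.inv x)) (fun y hy => hX _ y hy)
    (fun z hz w hw h => ?_) (hX x z hz) (hX x w hw) ?_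
  · simpa only [B.cop_eq_lam_inv] using hcong x hx x hx z hz w hw (hrefl x hx) h
  · rwa [B.lam_inv_lam, B.lam_inv_lam]

theorem lam_preserves [Finite A] (hX : ∀ a, ∀ x ∈ X, B.lam a x ∈ X)
    (hrefl : ∀ x ∈ X, r x x)
    (hcong : ∀ x ∈ X, ∀ y ∈ X, ∀ u ∈ X, ∀ v ∈ X, r x y → r u v → r (B.cop x u) (B.cop y v))
    (hgen : AddSubgroup.closure X = ⊤) (g : A) {z w : A} (hz : z ∈ X) (hw : w ∈ X)
    (h : r z w) : r (B.lam g z) (B.lam g w) := by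
  have hall : (AddSubgroup.closure X : Set A) ⊆
      {g | ∀ z ∈ X, ∀ w ∈ X, r z w → r (B.lam g z) (B.lam g w)} := by
    refine B.closure_subset_of_lam_mem hX ?_ ?_ ?_
    · intro z _ w _ h
      rwa [B.lam_zero_left, B.lam_zero_left]
    · intro a ha b hb z hz w hw h
      rw [B.lam_mul, B.lam_mul]
      exact ha _ (hX b z hz) _ (hX b w hw) (hb z hz w hw h)
    · exact fun x hx z hz w hw h => lam_preserves_of_mem hX hrefl hcong hx hz hw h
  exact hall (by simp [hgen]) z hz w hw h

theorem rel_of_rel_cop_self [Finite A] (hX : ∀ a, ∀ x ∈ X, B.lam a x ∈ X)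
    (hcong : ∀ x ∈ X, ∀ y ∈ X, ∀ u ∈ X, ∀ v ∈ X, r x y → r u v → r (B.cop x u) (B.cop y v))
    {u p : A} (hu : u ∈ X) (hp : p ∈ X) (h : r (B.cop u u) (B.cop p p)) : r u p := by
  have hinj : Injective fun x => B.cop x x := by
    intro x y hxy
    simp only [B.cop_self, neg_inj] at hxy
    rw [← B.inv_inv x, hxy, B.inv_inv]
  refine reflects_of_injective_of_finite hinj (fun x hx => ?_)
    (fun z hz w hw h => hcong z hz w hw z hz w hw h h) hu hp h
  show B.cop x x ∈ X
  rw [B.cop_eq_lam_inv]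
  exact hX _ x hx

theorem rel_lam_sub [Finite A] (hX : ∀ a, ∀ x ∈ X, B.lam a x ∈ X)
    (hrefl : ∀ x ∈ X, r x x)
    (hcong : ∀ x ∈ X, ∀ y ∈ X, ∀ u ∈ X, ∀ v ∈ X, r x y → r u v → r (B.cop x u) (B.cop y v))
    {u v : A} (hu : u ∈ X) (hv : v ∈ X) (huv : r u v) {z : A} (hz : z ∈ X) :
    r z (B.lam (u - v) z) := by
  set d := u - v
  set p := B.lam (B.inv d) v
  have hp : p ∈ X := hX _ v hv
  have hlam_u : ∀ c, B.lam u c = B.lam d (B.lam p c) := by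
    have hdp : B.mul d p = u := by
      rw [B.mul_eq_add_lam, B.lam_lam_inv]
      exact sub_add_cancel u v
    simp only [← hdp, B.lam_mul, implies_true]
  have hpp : B.cop p p = B.cop u v := by
    rw [B.cop_eq_lam_inv p, B.cop_eq_lam_inv u]
    apply B.lam_injective p
    rw [B.lam_lam_inv, ← B.lam_inv_lam d (B.lam p _), ← hlam_u, B.lam_lam_inv]
  have hup : r u p :=
    rel_of_rel_cop_self hX hcong hu hp (hpp ▸ hcong u hu u hu u hu v hv (hrefl u hu) huv)
  have hcop_mem : ∀ {y}, y ∈ X → B.cop y z ∈ X := fun _ => by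
    rw [B.cop_eq_lam_inv]
    exact hX _ z hz
  have h := lam_preserves_of_mem hX hrefl hcong hu (hcop_mem hu) (hcop_mem hp)
    (hcong u hu p hp z hz z hz hup (hrefl z hz))
  rwa [B.cop_eq_lam_inv u, B.lam_lam_inv, hlam_u, B.cop_eq_lam_inv p, B.lam_lam_inv] at h

theorem lam_mem_relDiffs [Finite A] (hX : ∀ a, ∀ x ∈ X, B.lam a x ∈ X)
    (hrefl : ∀ x ∈ X, r x x)
    (hcong : ∀ x ∈ X, ∀ y ∈ X, ∀ u ∈ X, ∀ v ∈ X, r x y → r u v → r (B.cop x u) (B.cop y v))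
    (hgen : AddSubgroup.closure X = ⊤) (g : A) {d : A} (hd : d ∈ relDiffs X r) :
    B.lam g d ∈ relDiffs X r := by
  obtain ⟨x, hx, y, hy, hxy, rfl⟩ := hd
  exact ⟨B.lam g x, hX g x hx, B.lam g y, hX g y hy,
    lam_preserves hX hrefl hcong hgen g hx hy hxy, B.lam_sub g x y⟩

theorem rel_lam_of_mem_closure_relDiffs [Finite A] (hX : ∀ a, ∀ x ∈ X, B.lam a x ∈ X)
    (hrefl : ∀ x ∈ X, r x x)
    (htrans : ∀ x ∈ X, ∀ y ∈ X, ∀ z ∈ X, r x y → r y z → r x z)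
    (hcong : ∀ x ∈ X, ∀ y ∈ X, ∀ u ∈ X, ∀ v ∈ X, r x y → r u v → r (B.cop x u) (B.cop y v))
    (hgen : AddSubgroup.closure X = ⊤) {a : A} (ha : a ∈ AddSubgroup.closure (relDiffs X r))
    {z : A} (hz : z ∈ X) : r z (B.lam a z) := by
  refine B.closure_subset_of_lam_mem (lam_mem_relDiffs hX hrefl hcong hgen)
    (P := {a | ∀ z ∈ X, r z (B.lam a z)}) ?_ ?_ ?_ ha z hz
  · intro z hz
    rw [B.lam_zero_left]
    exact hrefl z hz
  · intro a ha b hb z hz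
    rw [B.lam_mul]
    exact htrans _ hz _ (hX b z hz) _ (hX _ _ (hX b z hz)) (hb z hz) (ha _ (hX b z hz))
  · rintro _ ⟨u, hu, v, hv, huv, rfl⟩ z hz
    exact rel_lam_sub hX hrefl hcong hu hv huv hz

end CycleSet

end LeftBrace

theorem stmt9_general {A : Type*} [AddCommGroup A] [Finite A] (B : LeftBrace A)
    -- X is a transitive cycle base: an orbit of the λ-action generating (A, +)
    (X : Set A)
    (hclosed : ∀ a : A, ∀ x ∈ X, B.lam a x ∈ X)
    (hgen : AddSubgroup.closure X = ⊤)
    -- r is a congruence of the cycle set X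
    (r : A → A → Prop)
    (hrefl : ∀ x ∈ X, r x x)
    (htrans : ∀ x ∈ X, ∀ y ∈ X, ∀ z ∈ X, r x y → r y z → r x z)
    (hcong : ∀ x ∈ X, ∀ y ∈ X, ∀ u ∈ X, ∀ v ∈ X,
      r x y → r u v → r (B.cop x u) (B.cop y v))
    -- I' is the additive subgroup generated by {x - y : x, y ∈ X, x ∼ y}
    (I' : AddSubgroup A)
    (hI' : I' = AddSubgroup.closure {d : A | ∃ x ∈ X, ∃ y ∈ X, r x y ∧ d = x - y}) :
    -- I' is an ideal of A
    B.IsIdeal (I' : Set A) ∧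
    -- and the orbit relation of I' on X refines ∼
    (∀ x ∈ X, ∀ y ∈ X, (∃ a ∈ I', B.lam a x = y) → r x y) := by
  change I' = AddSubgroup.closure (LeftBrace.relDiffs X r) at hI'
  subst hI'
  have hrel : ∀ a ∈ AddSubgroup.closure (LeftBrace.relDiffs X r), ∀ z ∈ X, r z (B.lam a z) :=
    fun a ha z hz =>
      LeftBrace.rel_lam_of_mem_closure_relDiffs hclosed hrefl htrans hcong hgen ha hz
  refine ⟨B.isIdeal_of_lam_mem _ (fun g _ ha => ?_) (fun a ha c => ?_), ?_⟩
  · exact B.lam_mem_closure (LeftBrace.lam_mem_relDiffs hclosed hrefl hcong hgen) g ha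
  · have hle : AddSubgroup.closure X ≤ (AddSubgroup.closure (LeftBrace.relDiffs X r)).comap
        (AddMonoidHom.id A - B.lamHom a) :=
      AddSubgroup.closure_le _ |>.mpr fun x hx =>
        AddSubgroup.subset_closure ⟨x, hx, _, hclosed a x hx, hrel a ha x hx, rfl⟩
    exact hle (hgen ▸ AddSubgroup.mem_top c)
  · rintro x hx _ - ⟨a, ha, rfl⟩
    exact hrel a ha x hx

theorem stmt9 {A : Type*} [AddCommGroup A] [Finite A] (B : LeftBrace A)
    -- Soc(A) = {0}
    (hsoc : {a : A | ∀ b, a + b = B.mul a b} = {0})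
    -- X is a transitive cycle base: an orbit of the λ-action generating (A, +)
    (X : Set A) (hne : X.Nonempty)
    (hclosed : ∀ a : A, ∀ x ∈ X, B.lam a x ∈ X)
    (horbit : ∀ x ∈ X, ∀ y ∈ X, ∃ a : A, B.lam a x = y)
    (hgen : AddSubgroup.closure X = ⊤)
    -- r is a congruence of the cycle set X
    (r : A → A → Prop)
    (hrefl : ∀ x ∈ X, r x x)
    (hsymm : ∀ x ∈ X, ∀ y ∈ X, r x y → r y x)
    (htrans : ∀ x ∈ X, ∀ y ∈ X, ∀ z ∈ X, r x y → r y z → r x z)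
    (hcong : ∀ x ∈ X, ∀ y ∈ X, ∀ u ∈ X, ∀ v ∈ X,
      r x y → r u v → r (B.cop x u) (B.cop y v))
    -- I' is the additive subgroup generated by {x - y : x, y ∈ X, x ∼ y}
    (I' : AddSubgroup A)
    (hI' : I' = AddSubgroup.closure {d : A | ∃ x ∈ X, ∃ y ∈ X, r x y ∧ d = x - y}) :
    -- I' is an ideal of A
    B.IsIdeal (I' : Set A) ∧
    -- and the orbit relation of I' on X refines ∼
    (∀ x ∈ X, ∀ y ∈ X, (∃ a ∈ I', B.lam a x = y) → r x y) :=
  stmt9_general B X hclosed hgen r hrefl htrans hcong I' hI'
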